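/- (Lemma 3.6, block-triangular resolvents). Let H₁, …, H_N be real Hilbert spaces and K = H₁ ⊕ ⋯ ⊕ H_N their Hilbert direct sum (ℓ² product). For each i let A_i : H_i → Set H_i be maximally monotone, and for i, j ∈ {1, …, N} let H_{ij} : H_j → H_i be bounded linear with H_{ij} = 0 whenever j > i (lower triangular), where each diagonal block H_{ii} is self-adjoint and τ_i-strongly positive for some τ_i > 0. Define H : K → K by (H z)_i = Σ_{j ≤ i} H_{ij} z_j. Then for every z ∈ K there exists a unique z̄ ∈ K such that z_i − (H z̄)_i ∈ A_i(z̄_i) for all i (i.e. the resolvent (H + A)⁻¹ is single-valued with full domain), and the map z ↦ z̄ is continuous; moreover z̄ is obtained recursively: z̄_i is the unique solution of z_i − Σ_{j < i} H_{ij} z̄_j − H_{ii} z̄_i ∈ A_i(z̄_i). -/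

import Mathlib

/-!
Minty's theorem (`x + γ • u = w` has a solution with `u ∈ A x` for maximally monotone `A`) follows
from the Kirszbraun–Valentine property of Hilbert spaces: if `‖b i - b j‖ ≤ ‖a i - a j‖` for all
`i, j`, the balls `closedBall (b i) ‖a i‖` have a common point. For finitely many balls, a minimiser
of `y ↦ maxᵢ (‖y - b i‖² - ‖a i‖²)` lies in the convex hull of the active centres, and comparing
weighted sums of pairwise squared distances shows that the minimum is `≤ 0`; weak-* compactness of
balls passes to infinitely many. For strongly positive `U`, a solution of `c - U x ∈ A x` is the
fixed point of the contraction `x ↦ J (x - γ • (U x - c))`, `J` the resolvent of `γ • A`, and strong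
monotonicity makes it `τ⁻¹`-Lipschitz in `c`. Solving the block-triangular system block by block is
a strictly lower triangular map, whose `N`-th iterate is its unique fixed point.
-/

open scoped InnerProductSpace

/-- A set-valued operator is monotone. -/
def IsMonotoneSet {E : Type*} [NormedAddCommGroup E] [InnerProductSpace ℝ E]
    (A : E → Set E) : Prop :=
  ∀ x y u v, u ∈ A x → v ∈ A y → (0:ℝ) ≤ ⟪x - y, u - v⟫_ℝ

/-- A set-valued operator is maximally monotone. -/
def IsMaxMonotone {E : Type*} [NormedAddCommGroup E] [InnerProductSpace ℝ E]
    (A : E → Set E) : Prop :=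
  IsMonotoneSet A ∧ ∀ B : E → Set E, IsMonotoneSet B → (∀ x, A x ⊆ B x) → ∀ x, B x = A x

open scoped Topology
open Metric Finset Filter Function

section HilbertSpace

variable {E : Type*} [NormedAddCommGroup E] [InnerProductSpace ℝ E]

theorem sum_sum_mul_norm_sub_sq {ι : Type*} (s : Finset ι) {w : ι → ℝ}
    (hw : ∑ i ∈ s, w i = 1) (c : ι → E) :
    ∑ i ∈ s, ∑ j ∈ s, w i * w j * ‖c i - c j‖ ^ 2
      = 2 * ∑ i ∈ s, w i * ‖c i‖ ^ 2 - 2 * ‖∑ i ∈ s, w i • c i‖ ^ 2 := by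
  have hinner : ‖∑ i ∈ s, w i • c i‖ ^ 2 = ∑ i ∈ s, ∑ j ∈ s, w i * w j * ⟪c i, c j⟫_ℝ := by
    simp only [← real_inner_self_eq_norm_sq, sum_inner, inner_sum, real_inner_smul_left,
      real_inner_smul_right, mul_assoc]
    exact sum_congr rfl fun i _ => sum_congr rfl fun j _ => by rw [real_inner_comm]
  simp only [hinner, norm_sub_sq_real, mul_add, mul_sub, sum_add_distrib, sum_sub_distrib, mul_sum]
  rw [sum_comm (f := fun i j => w i * w j * ‖c j‖ ^ 2)]
  simp only [← sum_mul, ← mul_sum, hw, mul_one, one_mul, mul_left_comm _ (2 : ℝ)]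
  ring

theorem eventually_norm_add_smul_sub_sq_lt {y d b : E} (h : ⟪y - b, d⟫_ℝ < 0) :
    ∀ᶠ t in 𝓝[>] (0 : ℝ), ‖y + t • d - b‖ ^ 2 < ‖y - b‖ ^ 2 := by
  have hlim : Tendsto (fun t : ℝ => 2 * ⟪y - b, d⟫_ℝ + t * ‖d‖ ^ 2) (𝓝[>] 0)
      (𝓝 (2 * ⟪y - b, d⟫_ℝ)) :=
    tendsto_nhdsWithin_of_tendsto_nhds <| by
      simpa using ((continuous_id.mul continuous_const).const_add _).tendsto (0 : ℝ)
  filter_upwards [self_mem_nhdsWithin, hlim.eventually_lt_const (by linarith)] with t ht hlt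
  have hexpand : ‖y + t • d - b‖ ^ 2 = ‖y - b‖ ^ 2 + t * (2 * ⟪y - b, d⟫_ℝ + t * ‖d‖ ^ 2) := by
    rw [add_sub_right_comm, norm_add_sq_real, real_inner_smul_right, norm_smul, mul_pow,
      Real.norm_eq_abs, sq_abs]
    ring
  nlinarith [ht.out]

theorem mem_convexHull_active_of_minimizes_max {ι : Type*} [Finite ι] (b : ι → E) (ρ : ι → ℝ)
    {y₀ : E} {M : ℝ} (hy₀ : y₀ ∈ convexHull ℝ (Set.range b))
    (hle : ∀ i, ‖y₀ - b i‖ ^ 2 - ρ i ≤ M)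
    (hmin : ∀ y ∈ convexHull ℝ (Set.range b), ∃ i, M ≤ ‖y - b i‖ ^ 2 - ρ i) :
    y₀ ∈ convexHull ℝ (b '' {i | ‖y₀ - b i‖ ^ 2 - ρ i = M}) := by
  set S := {i | ‖y₀ - b i‖ ^ 2 - ρ i = M}
  have hC : IsCompact (convexHull ℝ (b '' S)) :=
    ((Set.toFinite S).image b).isCompact_convexHull ℝ
  have hCne : (convexHull ℝ (b '' S)).Nonempty := by
    obtain ⟨i, hi⟩ := hmin y₀ hy₀
    exact ⟨b i, subset_convexHull ℝ _ ⟨i, le_antisymm (hle i) hi, rfl⟩⟩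
  obtain ⟨p, hpC, hp⟩ := exists_norm_eq_iInf_of_complete_convex hCne hC.isComplete
    (convex_convexHull ℝ _) y₀
  have hproj := (norm_eq_iInf_iff_real_inner_le_zero (convex_convexHull ℝ _) hpC).1 hp
  by_contra hy₀C
  have hd : 0 < ‖p - y₀‖ := norm_pos_iff.2 (sub_ne_zero.2 (ne_of_mem_of_not_mem hpC hy₀C))
  -- moving from `y₀` towards its projection `p` on the active hull decreases every active
  -- function, and keeps the inactive ones below `M` for small steps
  have hdesc : ∀ i ∈ S, ⟪y₀ - b i, p - y₀⟫_ℝ < 0 := by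
    intro i hi
    have hbi := hproj (b i) (subset_convexHull ℝ _ ⟨i, hi, rfl⟩)
    have hsplit : ⟪y₀ - b i, p - y₀⟫_ℝ = ⟪y₀ - p, b i - p⟫_ℝ - ‖p - y₀‖ ^ 2 := by
      rw [← real_inner_self_eq_norm_sq, ← neg_sub p y₀, ← neg_sub (b i) y₀]
      simp only [inner_neg_left, inner_sub_left, inner_sub_right, real_inner_comm]
      ring
    nlinarith
  have hev : ∀ᶠ t in 𝓝[>] (0 : ℝ),
      t ∈ Set.Icc 0 1 ∧ ∀ i, ‖y₀ + t • (p - y₀) - b i‖ ^ 2 - ρ i < M := by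
    have hIcc : ∀ᶠ t in 𝓝[>] (0 : ℝ), t ∈ Set.Icc 0 1 := Icc_mem_nhdsGT zero_lt_one
    refine hIcc.and (eventually_all.2 fun i => ?_)
    by_cases hi : i ∈ S
    · filter_upwards [eventually_norm_add_smul_sub_sq_lt (hdesc i hi)] with t ht
      linarith [hi.out]
    · have hcont : Continuous fun t : ℝ => ‖y₀ + t • (p - y₀) - b i‖ ^ 2 - ρ i := by fun_prop
      refine tendsto_nhdsWithin_of_tendsto_nhds (hcont.tendsto 0) |>.eventually_lt_const ?_
      simpa using lt_of_le_of_ne (hle i) hi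
  obtain ⟨t, ht, hlt⟩ := hev.exists
  obtain ⟨i, hi⟩ := hmin _ ((convex_convexHull ℝ _).add_smul_sub_mem hy₀
    (convexHull_mono (Set.image_subset_range b S) hpC) ht)
  exact (hlt i).not_ge hi

theorem kirszbraun_of_finite {ι : Type*} [Finite ι] (a b : ι → E)
    (hab : ∀ i j, ‖b i - b j‖ ≤ ‖a i - a j‖) :
    ∃ y, ∀ i, ‖y - b i‖ ≤ ‖a i‖ := by
  cases nonempty_fintype ι
  rcases isEmpty_or_nonempty ι with _ | _
  · exact ⟨0, isEmptyElim⟩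
  let f : ι → E → ℝ := fun i y => ‖y - b i‖ ^ 2 - ‖a i‖ ^ 2
  let φ : E → ℝ := fun y => univ.sup' univ_nonempty fun i => f i y
  have hφ : Continuous φ := Continuous.finset_sup'_apply _ fun i _ => by fun_prop
  obtain ⟨y₀, hy₀, hmin⟩ := ((Set.finite_range b).isCompact_convexHull ℝ).exists_isMinOn
    ((Set.range_nonempty b).mono (subset_convexHull ℝ _)) hφ.continuousOn
  have hle : ∀ i, f i y₀ ≤ φ y₀ := fun i => le_sup' (fun j => f j y₀) (mem_univ i)
  have hmax : ∀ y ∈ convexHull ℝ (Set.range b), ∃ i, φ y₀ ≤ f i y := fun y hy => by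
    obtain ⟨i, -, hi⟩ := exists_mem_eq_sup' univ_nonempty fun j => f j y
    exact ⟨i, hi ▸ hmin hy⟩
  obtain ⟨κ, _, w, z, hw₀, hw₁, hz, hwz⟩ := mem_convexHull_iff_exists_fintype.1
    (mem_convexHull_active_of_minimizes_max b (fun i => ‖a i‖ ^ 2) hy₀ hle hmax)
  choose j hj_active hjz using hz
  have hM : φ y₀ ≤ 0 := by
    have hb := sum_sum_mul_norm_sub_sq univ hw₁ fun k => b (j k) - y₀
    have ha := sum_sum_mul_norm_sub_sq univ hw₁ fun k => a (j k)
    have hcentre : ∑ k, w k • (b (j k) - y₀) = 0 := by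
      simp [smul_sub, sum_sub_distrib, ← sum_smul, hw₁, hjz, hwz]
    have hactive : ∑ k, w k * ‖b (j k) - y₀‖ ^ 2 = ∑ k, w k * ‖a (j k)‖ ^ 2 + φ y₀ := by
      calc ∑ k, w k * ‖b (j k) - y₀‖ ^ 2 = ∑ k, (w k * ‖a (j k)‖ ^ 2 + w k * φ y₀) :=
            sum_congr rfl fun k _ => by rw [norm_sub_rev, ← (hj_active k).out]; ring
        _ = _ := by rw [sum_add_distrib, ← sum_mul, hw₁, one_mul]
    have hpair : ∑ k, ∑ l, w k * w l * ‖(b (j k) - y₀) - (b (j l) - y₀)‖ ^ 2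
        ≤ ∑ k, ∑ l, w k * w l * ‖a (j k) - a (j l)‖ ^ 2 := by
      gcongr with k _ l _
      · exact mul_nonneg (hw₀ k) (hw₀ l)
      · rw [sub_sub_sub_cancel_right]; exact hab _ _
    rw [hb, ha, hcentre, hactive, norm_zero] at hpair
    nlinarith [sq_nonneg ‖∑ k, w k • a (j k)‖]
  exact ⟨y₀, fun i =>
    (pow_le_pow_iff_left₀ (norm_nonneg _) (norm_nonneg _) two_ne_zero).1 (by linarith [hle i])⟩

theorem nonempty_iInter_closedBall_of_forall_finset [CompleteSpace E] {ι : Type*}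
    (c : ι → E) (r : ι → ℝ)
    (h : ∀ u : Finset ι, (⋂ i ∈ u, closedBall (c i) (r i)).Nonempty) :
    (⋂ i, closedBall (c i) (r i)).Nonempty := by
  classical
  rcases isEmpty_or_nonempty ι with hι | ⟨⟨i₀⟩⟩
  · simp
  -- through the Riesz isometry `E ≃ StrongDual ℝ E`, closed balls of `E` are weak-* compact
  let Φ := InnerProductSpace.toDual ℝ E
  let ball : ι → Set (WeakDual ℝ E) := fun i =>
    WeakDual.toStrongDual ⁻¹' closedBall (Φ (c i)) (r i)
  have hmem : ∀ y i, StrongDual.toWeakDual (Φ y) ∈ ball i ↔ y ∈ closedBall (c i) (r i) := by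
    intro y i
    simp [ball, Φ.dist_map]
  obtain ⟨φ, -, hφ⟩ := (WeakDual.isCompact_closedBall (Φ (c i₀)) (r i₀)).inter_iInter_nonempty
    ball (fun i => WeakDual.isClosed_closedBall _ _) fun u => by
      obtain ⟨y, hy⟩ := h (insert i₀ u)
      simp only [Set.mem_iInter, mem_insert] at hy
      exact ⟨_, (hmem y i₀).2 (hy i₀ (.inl rfl)),
        Set.mem_iInter₂.2 fun i hi => (hmem y i).2 (hy i (.inr hi))⟩
  refine ⟨Φ.symm (WeakDual.toStrongDual φ), Set.mem_iInter.2 fun i => (hmem _ i).1 ?_⟩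
  simpa using Set.mem_iInter.1 hφ i

theorem kirszbraun [CompleteSpace E] {ι : Type*} (a b : ι → E)
    (hab : ∀ i j, ‖b i - b j‖ ≤ ‖a i - a j‖) :
    ∃ y, ∀ i, ‖y - b i‖ ≤ ‖a i‖ := by
  obtain ⟨y, hy⟩ := nonempty_iInter_closedBall_of_forall_finset b (fun i => ‖a i‖) fun u => by
    obtain ⟨y, hy⟩ := kirszbraun_of_finite (fun i : u => a i) (fun i : u => b i)
      fun i j => hab i j
    exact ⟨y, Set.mem_iInter₂.2 fun i hi => mem_closedBall_iff_norm.2 (hy ⟨i, hi⟩)⟩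
  exact ⟨y, fun i => mem_closedBall_iff_norm.1 (Set.mem_iInter.1 hy i)⟩

theorem norm_sub_le_norm_add_iff_inner_nonneg (x y : E) : ‖x - y‖ ≤ ‖x + y‖ ↔ 0 ≤ ⟪x, y⟫_ℝ := by
  rw [← pow_le_pow_iff_left₀ (norm_nonneg _) (norm_nonneg _) two_ne_zero, norm_sub_sq_real,
    norm_add_sq_real]
  constructor <;> intro h <;> linarith

theorem IsMonotoneSet.norm_sub_le_norm_add_smul_sub {A : E → Set E} (hA : IsMonotoneSet A)
    {c : ℝ} (hc : 0 ≤ c) {x x' u u' : E} (hu : u ∈ A x) (hu' : u' ∈ A x') :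
    ‖x - x'‖ ≤ ‖(x + c • u) - (x' + c • u')‖ := by
  have hmono := mul_nonneg hc (hA x x' u u' hu hu')
  rw [← pow_le_pow_iff_left₀ (norm_nonneg _) (norm_nonneg _) two_ne_zero,
    add_sub_add_comm, ← smul_sub, norm_add_sq_real, real_inner_smul_right]
  nlinarith [sq_nonneg ‖c • (u - u')‖]

theorem IsMonotoneSet.mul_norm_sub_le {A : E → Set E} (hA : IsMonotoneSet A) (U : E →L[ℝ] E)
    {τ : ℝ} (hU : ∀ x, τ * ‖x‖ ^ 2 ≤ ⟪U x, x⟫_ℝ) {c c' x x' : E}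
    (hx : c - U x ∈ A x) (hx' : c' - U x' ∈ A x') : τ * ‖x - x'‖ ≤ ‖c - c'‖ := by
  have hmono := hA x x' _ _ hx hx'
  rw [sub_sub_sub_comm, ← map_sub, inner_sub_right] at hmono
  have h : τ * ‖x - x'‖ ^ 2 ≤ ‖x - x'‖ * ‖c - c'‖ := (hU _).trans <| by
    linarith [real_inner_le_norm (x - x') (c - c'), real_inner_comm (x - x') (U (x - x'))]
  rcases (norm_nonneg (x - x')).eq_or_lt with h0 | hpos
  · rw [← h0, mul_zero]; exact norm_nonneg _
  · nlinarith

theorem norm_sub_smul_apply_sq_le (U : E →L[ℝ] E) {τ c : ℝ}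
    (hU : ∀ x, τ * ‖x‖ ^ 2 ≤ ⟪U x, x⟫_ℝ) (hc : 0 ≤ c) (hcU : c * ‖U‖ ^ 2 ≤ τ) (x : E) :
    ‖x - c • U x‖ ^ 2 ≤ (1 - c * τ) * ‖x‖ ^ 2 := by
  have hUx : ‖U x‖ ^ 2 ≤ ‖U‖ ^ 2 * ‖x‖ ^ 2 := by
    rw [← mul_pow]; exact pow_le_pow_left₀ (norm_nonneg _) (U.le_opNorm x) 2
  rw [norm_sub_sq_real, real_inner_smul_right, norm_smul, mul_pow, Real.norm_eq_abs, sq_abs,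
    real_inner_comm]
  nlinarith [hU x, mul_le_mul_of_nonneg_left hUx (mul_nonneg hc hc),
    mul_le_mul_of_nonneg_right hcU (mul_nonneg hc (sq_nonneg ‖x‖))]

namespace IsMaxMonotone

variable {A : E → Set E}

theorem mem_of_forall_inner_nonneg (hA : IsMaxMonotone A) {x u : E}
    (h : ∀ y v, v ∈ A y → 0 ≤ ⟪x - y, u - v⟫_ℝ) : u ∈ A x := by
  let B : E → Set E := fun y => A y ∪ {v | y = x ∧ v = u}
  have hB : IsMonotoneSet B := by
    rintro y y' v v' (hv | ⟨rfl, rfl⟩) (hv' | ⟨rfl, rfl⟩)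
    · exact hA.1 y y' v v' hv hv'
    · rw [← neg_sub y', ← neg_sub v', inner_neg_neg]; exact h y v hv
    · exact h y' v' hv'
    · simp
  rw [← hA.2 B hB (fun y => Set.subset_union_left) x]
  exact Or.inr ⟨rfl, rfl⟩

theorem exists_add_smul_eq [CompleteSpace E] (hA : IsMaxMonotone A) {c : ℝ} (hc : 0 < c)
    (w : E) : ∃ x, ∃ u ∈ A x, x + c • u = w := by
  obtain ⟨y, hy⟩ := kirszbraun (fun p : {p : E × E // p.2 ∈ A p.1} => p.1.1 + c • p.1.2 - w)
    (fun p => p.1.1 - c • p.1.2) fun p q => by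
      rw [show p.1.1 + c • p.1.2 - w - (q.1.1 + c • q.1.2 - w)
          = (p.1.1 - q.1.1) + c • (p.1.2 - q.1.2) by module,
        show p.1.1 - c • p.1.2 - (q.1.1 - c • q.1.2)
          = (p.1.1 - q.1.1) - c • (p.1.2 - q.1.2) by module,
        norm_sub_le_norm_add_iff_inner_nonneg, real_inner_smul_right]
      exact mul_nonneg hc.le (hA.1 _ _ _ _ p.2 q.2)
  set x := (2 : ℝ)⁻¹ • (w + y)
  set v := (2 : ℝ)⁻¹ • (w - y)
  have hxv : x + v = w := by module
  have hxy : x - v = y := by module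
  refine ⟨x, c⁻¹ • v, hA.mem_of_forall_inner_nonneg fun x' u hu => ?_,
    by rw [smul_inv_smul₀ hc.ne', hxv]⟩
  have h := hy ⟨(x', u), hu⟩
  rw [← hxy, ← hxv, show x - v - (x' - c • u) = (x - x') - c • (c⁻¹ • v - u) by
      rw [smul_sub, smul_inv_smul₀ hc.ne']; abel,
    show x' + c • u - (x + v) = -((x - x') + c • (c⁻¹ • v - u)) by
      rw [smul_sub, smul_inv_smul₀ hc.ne']; abel,
    norm_neg, norm_sub_le_norm_add_iff_inner_nonneg, real_inner_smul_right] at h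
  exact nonneg_of_mul_nonneg_right h hc

theorem exists_sub_apply_mem [CompleteSpace E] (hA : IsMaxMonotone A) (U : E →L[ℝ] E) {τ : ℝ}
    (hτ : 0 < τ) (hU : ∀ x, τ * ‖x‖ ^ 2 ≤ ⟪U x, x⟫_ℝ) (c : E) : ∃ x, c - U x ∈ A x := by
  set γ := τ / (‖U‖ ^ 2 + τ ^ 2)
  have hγ : 0 < γ := by positivity
  have hγU : γ * ‖U‖ ^ 2 ≤ τ := by
    rw [div_mul_eq_mul_div, div_le_iff₀ (by positivity)]; nlinarith [pow_pos hτ 3]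
  have hγτ : 0 ≤ 1 - γ * τ := by
    rw [sub_nonneg, div_mul_eq_mul_div, div_le_one (by positivity)]; nlinarith [sq_nonneg ‖U‖]
  choose J u hu hJ using hA.exists_add_smul_eq hγ
  let T : E → E := fun x => J (x - γ • (U x - c))
  have hT : ContractingWith (Real.toNNReal √(1 - γ * τ)) T := by
    refine ⟨Real.toNNReal_lt_one.2 ((Real.sqrt_lt' one_pos).2 ?_), ?_⟩
    · nlinarith [mul_pos hγ hτ]
    refine LipschitzWith.of_dist_le' fun x x' => ?_
    have hJ_lip := hA.1.norm_sub_le_norm_add_smul_sub hγ.le (hu (x - γ • (U x - c)))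
      (hu (x' - γ • (U x' - c)))
    rw [hJ, hJ] at hJ_lip
    rw [dist_eq_norm, dist_eq_norm]
    calc ‖T x - T x'‖ ≤ ‖(x - x') - γ • U (x - x')‖ := hJ_lip.trans_eq (by
          rw [map_sub]; congr 1; module)
      _ = √(‖(x - x') - γ • U (x - x')‖ ^ 2) := (Real.sqrt_sq (norm_nonneg _)).symm
      _ ≤ √((1 - γ * τ) * ‖x - x'‖ ^ 2) :=
          Real.sqrt_le_sqrt (norm_sub_smul_apply_sq_le U hU hγ.le hγU _)
      _ = √(1 - γ * τ) * ‖x - x'‖ := by rw [Real.sqrt_mul hγτ, Real.sqrt_sq (norm_nonneg _)]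
  obtain ⟨x, hx⟩ : ∃ x, T x = x := ⟨_, hT.fixedPoint_isFixedPt⟩
  set y := x - γ • (U x - c)
  have hJy : J y = x := hx
  have huy : u y = c - U x :=
    smul_right_injective E hγ.ne' (add_left_cancel ((hJy ▸ hJ y).trans (by module)))
  exact ⟨x, huy ▸ hJy ▸ hu y⟩

theorem exists_continuous_resolvent [CompleteSpace E] (hA : IsMaxMonotone A) (U : E →L[ℝ] E)
    {τ : ℝ} (hτ : 0 < τ) (hU : ∀ x, τ * ‖x‖ ^ 2 ≤ ⟪U x, x⟫_ℝ) :
    ∃ r : E → E, Continuous r ∧ ∀ c x, c - U x ∈ A x ↔ x = r c := by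
  choose r hr using hA.exists_sub_apply_mem U hτ hU
  refine ⟨r, (LipschitzWith.of_dist_le' (K := τ⁻¹) fun c c' => ?_).continuous,
    fun c x => ⟨fun hx => ?_, fun h => h ▸ hr c⟩⟩
  · rw [dist_eq_norm, dist_eq_norm, inv_mul_eq_div, le_div_iff₀' hτ]
    exact hA.1.mul_norm_sub_le U hU (hr c) (hr c')
  · have h := hA.1.mul_norm_sub_le U hU hx (hr c)
    rw [sub_self, norm_zero] at h
    exact sub_eq_zero.1 (norm_le_zero_iff.1 (le_of_mul_le_mul_left (by simpa using h) hτ))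

end IsMaxMonotone

end HilbertSpace

theorem sum_univ_eq_sum_filter_lt_add {ι M : Type*} [Fintype ι] [LinearOrder ι]
    [AddCommMonoid M] {f : ι → M} {i : ι} (hf : ∀ j, i < j → f j = 0) :
    ∑ j, f j = ∑ j ∈ univ.filter (· < i), f j + f i := by
  rw [← sum_filter_add_sum_filter_not univ (· < i)]
  congr 1
  refine sum_eq_single_of_mem i (by simp) fun j hj hji => hf j ?_
  exact lt_of_le_of_ne (not_lt.1 (mem_filter.1 hj).2) (Ne.symm hji)

theorem continuous_iterate_apply {Z Y : Type*} [TopologicalSpace Z] [TopologicalSpace Y]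
    {Φ : Z → Y → Y} (hΦ : Continuous (uncurry Φ)) (n : ℕ) (y : Y) :
    Continuous fun z => (Φ z)^[n] y := by
  induction n with
  | zero => exact continuous_const
  | succ n ih =>
    simp only [iterate_succ_apply']
    exact hΦ.comp (continuous_id.prodMk ih)

section StrictlyLowerTriangular

variable {N : ℕ} {X : Fin N → Type*}

def IsStrictlyLowerTriangular (Φ : (∀ i, X i) → ∀ i, X i) : Prop :=
  ∀ y y' i, (∀ j < i, y j = y' j) → Φ y i = Φ y' i

namespace IsStrictlyLowerTriangular

variable {Φ : (∀ i, X i) → ∀ i, X i}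

theorem iterate_apply_eq (hΦ : IsStrictlyLowerTriangular Φ) {k : ℕ} (y y' : ∀ i, X i)
    {i : Fin N} (hi : (i : ℕ) < k) : Φ^[k] y i = Φ^[k] y' i := by
  induction k generalizing i with
  | zero => exact absurd hi (Nat.not_lt_zero _)
  | succ k ih =>
    rw [iterate_succ_apply', iterate_succ_apply']
    exact hΦ _ _ i fun j hj => ih (by omega)

theorem isFixedPt_iterate (hΦ : IsStrictlyLowerTriangular Φ) (y : ∀ i, X i) :
    IsFixedPt Φ (Φ^[N] y) := by
  funext i
  rw [← iterate_succ_apply' Φ N y, iterate_succ_apply]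
  exact hΦ.iterate_apply_eq _ _ i.isLt

theorem eq_iterate_of_isFixedPt (hΦ : IsStrictlyLowerTriangular Φ) {w : ∀ i, X i}
    (hw : IsFixedPt Φ w) (y : ∀ i, X i) : w = Φ^[N] y :=
  funext fun i => (congrFun (hw.iterate N) i).symm.trans (hΦ.iterate_apply_eq w y i.isLt)

end IsStrictlyLowerTriangular

end StrictlyLowerTriangular

theorem block_triangular_resolvent_general
    {N : ℕ} (Hs : Fin N → Type*)
    [∀ i, NormedAddCommGroup (Hs i)] [∀ i, InnerProductSpace ℝ (Hs i)]
    [∀ i, CompleteSpace (Hs i)]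
    (A : ∀ i, Hs i → Set (Hs i)) (hA : ∀ i, IsMaxMonotone (A i))
    (Hop : ∀ i j : Fin N, Hs j →L[ℝ] Hs i)
    (htri : ∀ i j : Fin N, i < j → Hop i j = 0)
    (τ : Fin N → ℝ) (hτ : ∀ i, 0 < τ i)
    (hdiag_pos : ∀ (i : Fin N) (x : Hs i), τ i * ‖x‖ ^ 2 ≤ ⟪Hop i i x, x⟫_ℝ) :
    ∃ G : PiLp 2 Hs → PiLp 2 Hs, Continuous G ∧
      (∀ z : PiLp 2 Hs,
        (∀ i, z i - ∑ j, Hop i j (G z j) ∈ A i (G z i)) ∧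
        (∀ w : PiLp 2 Hs, (∀ i, z i - ∑ j, Hop i j (w j) ∈ A i (w i)) → w = G z)) ∧
      (∀ (z : PiLp 2 Hs) (i : Fin N) (v : Hs i),
        (z i - ∑ j ∈ Finset.univ.filter (fun j => j < i), Hop i j (G z j)
          - Hop i i v ∈ A i v) ↔ v = G z i) := by
  choose r hr_cont hr using fun i =>
    (hA i).exists_continuous_resolvent (Hop i i) (hτ i) (hdiag_pos i)
  -- block forward substitution: `Φ z y i` solves the `i`-th inclusion given `y j` for `j < i`
  let Φ : (∀ i, Hs i) → (∀ i, Hs i) → ∀ i, Hs i := fun z y i =>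
    r i (z i - ∑ j ∈ univ.filter (· < i), Hop i j (y j))
  have hΦ_lower : ∀ z, IsStrictlyLowerTriangular (Φ z) := fun z y y' i h => by
    simp only [Φ]
    rw [sum_congr rfl fun j hj => by rw [h j (mem_filter.1 hj).2]]
  have hΦ_cont : Continuous (uncurry Φ) :=
    continuous_pi fun i => (hr_cont i).comp (by fun_prop)
  have hsolves : ∀ z w : ∀ i, Hs i,
      (∀ i, z i - ∑ j, Hop i j (w j) ∈ A i (w i)) ↔ IsFixedPt (Φ z) w := by
    refine fun z w => (forall_congr' fun i => ?_).trans funext_iff.symm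
    rw [sum_univ_eq_sum_filter_lt_add fun j hj => by simp [htri i j hj], ← sub_sub, hr, eq_comm]
  let G : PiLp 2 Hs → PiLp 2 Hs := fun z => WithLp.toLp 2 ((Φ z.ofLp)^[N] 0)
  have hG : ∀ z, IsFixedPt (Φ z.ofLp) (G z).ofLp := fun z => (hΦ_lower _).isFixedPt_iterate 0
  refine ⟨G, ?_, fun z => ⟨(hsolves _ _).2 (hG z), fun w hw => ?_⟩, fun z i v => ?_⟩
  · exact (PiLp.continuous_toLp 2 Hs).comp
      ((continuous_iterate_apply hΦ_cont N 0).comp (PiLp.continuous_ofLp 2 Hs))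
  · exact congrArg (WithLp.toLp 2) ((hΦ_lower _).eq_iterate_of_isFixedPt ((hsolves _ _).1 hw) 0)
  · rw [hr, ← congrFun (hG z) i]

/-- Lemma 3.6: block-triangular resolvents.  If `A` is block separable with maximally
monotone blocks and `H` is block lower triangular with strongly positive self-adjoint
diagonal blocks, then the resolvent `(H + A)⁻¹` is single-valued with full domain and
continuous, and its value is obtained recursively one block at a time. -/
theorem block_triangular_resolvent
    {N : ℕ} (Hs : Fin N → Type*)
    [∀ i, NormedAddCommGroup (Hs i)] [∀ i, InnerProductSpace ℝ (Hs i)]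
    [∀ i, CompleteSpace (Hs i)]
    (A : ∀ i, Hs i → Set (Hs i)) (hA : ∀ i, IsMaxMonotone (A i))
    (Hop : ∀ i j : Fin N, Hs j →L[ℝ] Hs i)
    (htri : ∀ i j : Fin N, i < j → Hop i j = 0)
    (hdiag_sym : ∀ (i : Fin N) (x y : Hs i), ⟪Hop i i x, y⟫_ℝ = ⟪x, Hop i i y⟫_ℝ)
    (τ : Fin N → ℝ) (hτ : ∀ i, 0 < τ i)
    (hdiag_pos : ∀ (i : Fin N) (x : Hs i), τ i * ‖x‖ ^ 2 ≤ ⟪Hop i i x, x⟫_ℝ) :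
    ∃ G : PiLp 2 Hs → PiLp 2 Hs, Continuous G ∧
      (∀ z : PiLp 2 Hs,
        (∀ i, z i - ∑ j, Hop i j (G z j) ∈ A i (G z i)) ∧
        (∀ w : PiLp 2 Hs, (∀ i, z i - ∑ j, Hop i j (w j) ∈ A i (w i)) → w = G z)) ∧
      (∀ (z : PiLp 2 Hs) (i : Fin N) (v : Hs i),
        (z i - ∑ j ∈ Finset.univ.filter (fun j => j < i), Hop i j (G z j)
          - Hop i i v ∈ A i v) ↔ v = G z i) :=
  block_triangular_resolvent_general Hs A hA Hop htri τ hτ hdiag_pos
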